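/- Let G be a finite simple connected graph with at least two vertices, and let X ⊆ V(G) be a feedback vertex set of G with |X| = ℓ. Then G admits an (ℓ+3)-ONCF-coloring; that is, χ_ON(G) ≤ ℓ + 3. -/

import Mathlib

/-!
Give the vertices of `X` pairwise distinct private colours and root every component of the forest
`G - X` at a vertex with at most one neighbour in it. Colouring the forest by depth with the
pattern `0, 0, 1, 1, 0, 0, …` makes the parent of every non-root vertex `v` the only neighbour of
`v` in its colour class, and a root sees either its unique child or a vertex of `X` with a unique
colour. What remains are the vertices `y ∈ X` without neighbours in `X`. Such a `y` lends its
private colour to a deepest neighbour `w`; since no child of `w` is adjacent to `y`, the parent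
`w` keeps a unique colour among the neighbours of each child. This fails only for a triangle
formed by `y`, a root whose only neighbour in `X` is `y`, and the child of that root: such
triangles are avoided when choosing `w`, and if all neighbours of `y` lie in them, the chosen
child gets a third forest colour instead.
-/

/-- A coloring `c` of the vertices of `G` is an open-neighborhood conflict-free
coloring if every open neighborhood `N(v)` contains a vertex whose color is unique
in `N(v)`. -/
def IsONCF {V C : Type*} (G : SimpleGraph V) (c : V → C) : Prop :=
  ∀ v : V, ∃ u ∈ G.neighborSet v, ∀ w ∈ G.neighborSet v, w ≠ u → c w ≠ c u

namespace SimpleGraph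

variable {W : Type*} {H : SimpleGraph W}

lemma Reachable.exists_adj_dist_add_one {r v : W} (hr : H.Reachable r v) (hne : r ≠ v) :
    ∃ u, H.Adj u v ∧ H.dist r u + 1 = H.dist r v := by
  obtain ⟨p, -, hp⟩ := hr.exists_path_of_dist
  have hnil : ¬p.Nil := Walk.not_nil_of_ne hne
  have hadj := p.adj_penultimate hnil
  refine ⟨p.penultimate, hadj, le_antisymm ?_ ?_⟩
  · have := dist_le p.dropLast
    rw [Walk.length_dropLast] at this
    have := hr.pos_dist_of_ne hne
    omega
  · have := hadj.reachable.dist_triangle_right r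
    rwa [dist_eq_one_iff_adj.mpr hadj] at this

lemma IsAcyclic.eq_penultimate_of_dist_add_one (hH : H.IsAcyclic) {r u v : W} {q : H.Walk r v}
    (hq : q.IsPath) (huv : H.Adj u v) (hru : H.Reachable r u)
    (hd : H.dist r u + 1 = H.dist r v) : u = q.penultimate := by
  classical
  refine hH.eq_penultimate_of_adj_end hq huv.symm ?_
  obtain ⟨p, hp, hplen⟩ := hru.exists_path_of_dist
  by_contra hu
  have hv := hH.mem_support_of_ne_mem_support_of_adj_of_isPath hp hq huv hu
  have := dist_le (p.takeUntil v hv)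
  have := p.length_takeUntil_le_length hv
  omega

lemma IsAcyclic.eq_of_adj_of_dist_add_one (hH : H.IsAcyclic) {r u u' v : W}
    (hu : H.Adj u v) (hu' : H.Adj u' v) (hru : H.Reachable r u) (hru' : H.Reachable r u')
    (hd : H.dist r u + 1 = H.dist r v) (hd' : H.dist r u' + 1 = H.dist r v) : u = u' := by
  obtain ⟨q, hq, -⟩ := (hru.trans hu.reachable).exists_path_of_dist
  rw [hH.eq_penultimate_of_dist_add_one hq hu hru hd,
    hH.eq_penultimate_of_dist_add_one hq hu' hru' hd']

/-- A vertex farthest from `o` in its component has at most one neighbour. -/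
lemma IsAcyclic.exists_reachable_subsingleton_neighborSet [Finite W] (hH : H.IsAcyclic) (o : W) :
    ∃ r, H.Reachable o r ∧ (H.neighborSet r).Subsingleton := by
  obtain ⟨r, hor, hmax⟩ := Set.exists_max_image {v | H.Reachable o v} (H.dist o)
    (Set.toFinite _) ⟨o, .refl o⟩
  refine ⟨r, hor, fun a ha b hb => ?_⟩
  have parent {c} (hc : H.Adj r c) : H.dist o c + 1 = H.dist o r := by
    have := hmax c (hor.trans hc.reachable)
    have := hH.dist_eq_dist_add_one_of_adj_of_reachable o hc hor
    omega
  exact hH.eq_of_adj_of_dist_add_one ha.symm hb.symm (hor.trans ha.reachable)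
    (hor.trans hb.reachable) (parent ha) (parent hb)

end SimpleGraph

open SimpleGraph

section

variable {V : Type*}

def IsONCFAt {C : Type*} (G : SimpleGraph V) (c : V → C) (v : V) : Prop :=
  ∃ u ∈ G.neighborSet v, ∀ w ∈ G.neighborSet v, w ≠ u → c w ≠ c u

lemma IsONCF.comp {C D : Type*} {G : SimpleGraph V} {c : V → C} (hc : IsONCF G c) {f : C → D}
    (hf : f.Injective) : IsONCF G (f ∘ c) := fun v =>
  (hc v).imp fun _ ⟨hu, huniq⟩ => ⟨hu, fun w hw hwu => hf.ne (huniq w hw hwu)⟩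

lemma isONCFAt_of_subsingleton_neighborSet_of_adj {C : Type*} {G : SimpleGraph V} (c : V → C)
    {v u : V} (h : (G.neighborSet v).Subsingleton) (hu : G.Adj v u) : IsONCFAt G c v :=
  ⟨u, hu, fun _ hw hwu => absurd (h hw hu) hwu⟩

/-- The depth function of a rooting of the forest `G - X` in which every root has at most one
neighbour in `G - X`. -/
structure LeafRooting (G : SimpleGraph V) (X : Set V) where
  depth : V → ℕ
  depth_eq_or_of_adj {a b : V} : a ∉ X → b ∉ X → G.Adj a b →
    depth b = depth a + 1 ∨ depth a = depth b + 1
  existsUnique_parent {a : V} : a ∉ X → depth a ≠ 0 →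
    ∃! p, p ∉ X ∧ G.Adj p a ∧ depth p + 1 = depth a
  eq_of_adj_of_depth_eq_zero {r a b : V} : r ∉ X → depth r = 0 → a ∉ X → b ∉ X →
    G.Adj r a → G.Adj r b → a = b

theorem LeafRooting.nonempty_of_isAcyclic [Finite V] {G : SimpleGraph V} {X : Set V}
    (hX : (G.induce {v | v ∉ X}).IsAcyclic) : Nonempty (LeafRooting G X) := by
  classical
  set F := G.induce {v | v ∉ X}
  have hroot (K : F.ConnectedComponent) :
      ∃ r, F.connectedComponentMk r = K ∧ (F.neighborSet r).Subsingleton := by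
    induction K using ConnectedComponent.ind with | h o => ?_
    obtain ⟨r, hor, hr⟩ := hX.exists_reachable_subsingleton_neighborSet o
    exact ⟨r, (ConnectedComponent.sound hor).symm, hr⟩
  choose ρ hρ hρleaf using hroot
  set root := fun a => ρ (F.connectedComponentMk a)
  have reach (a) : F.Reachable (root a) a := ConnectedComponent.exact (hρ _)
  have root_adj {a b} (h : F.Adj a b) : root a = root b :=
    congrArg ρ (ConnectedComponent.connectedComponentMk_eq_of_adj h)
  set depth : V → ℕ := fun v => if h : v ∈ X then 0 else F.dist (root ⟨v, h⟩) ⟨v, h⟩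
  have hdepth {a} (ha : a ∉ X) : depth a = F.dist (root ⟨a, ha⟩) ⟨a, ha⟩ := dif_neg ha
  refine ⟨⟨depth, ?_, ?_, ?_⟩⟩
  · intro a b ha hb hab
    have hab' : F.Adj ⟨a, ha⟩ ⟨b, hb⟩ := hab
    rw [hdepth ha, hdepth hb, ← root_adj hab']
    exact (hX.dist_eq_dist_add_one_of_adj_of_reachable _ hab' (reach _)).symm
  · intro a ha h0
    rw [hdepth ha] at h0 ⊢
    have hne : root ⟨a, ha⟩ ≠ ⟨a, ha⟩ := fun h => h0 (by rw [h, SimpleGraph.dist_self])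
    obtain ⟨p, hpa, hp⟩ := (reach _).exists_adj_dist_add_one hne
    refine ⟨p, ⟨p.2, hpa, by rwa [hdepth p.2, root_adj hpa]⟩, ?_⟩
    rintro q ⟨hq, hqa, hqd⟩
    rw [hdepth hq] at hqd
    have hqa' : F.Adj ⟨q, hq⟩ ⟨a, ha⟩ := hqa
    rw [root_adj hqa'] at hqd
    exact congrArg Subtype.val (hX.eq_of_adj_of_dist_add_one hqa' hpa
      ((root_adj hqa').symm ▸ reach _) ((root_adj hpa).symm ▸ reach _) hqd hp)
  · intro r a b hr h0 ha hb hra hrb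
    rw [hdepth hr, (reach _).dist_eq_zero_iff] at h0
    have := hρleaf (F.connectedComponentMk ⟨r, hr⟩)
    rw [show ρ _ = _ from h0] at this
    exact congrArg Subtype.val (this (x := ⟨a, ha⟩) hra (y := ⟨b, hb⟩) hrb)

structure IsIsolatedIn (G : SimpleGraph V) (X : Set V) (y : V) : Prop where
  mem : y ∈ X
  not_mem_of_adj : ∀ z, G.Adj y z → z ∉ X

namespace LeafRooting

variable {G : SimpleGraph V} {X : Set V} (L : LeafRooting G X)

lemma eq_of_depth_add_one_eq {a p q : V} (ha : a ∉ X) (hp : p ∉ X) (hq : q ∉ X)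
    (hpa : G.Adj p a) (hqa : G.Adj q a) (hpd : L.depth p + 1 = L.depth a)
    (hqd : L.depth q + 1 = L.depth a) : p = q :=
  (L.existsUnique_parent ha (by omega)).unique ⟨hp, hpa, hpd⟩ ⟨hq, hqa, hqd⟩

lemma depth_eq_add_one_of_adj {a p u : V} (ha : a ∉ X) (hp : p ∉ X) (hu : u ∉ X)
    (hpa : G.Adj p a) (hpd : L.depth p + 1 = L.depth a) (hau : G.Adj a u) (hup : u ≠ p) :
    L.depth u = L.depth a + 1 :=
  (L.depth_eq_or_of_adj ha hu hau).resolve_right fun h =>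
    hup (L.eq_of_depth_add_one_eq ha hu hp hau.symm hpa h.symm hpd)

/-- If `b` took the colour of `y`, no neighbour of the root `r` would have a unique colour. -/
structure IsTrap (y r b : V) : Prop where
  depth_root : L.depth r = 0
  root_not_mem : r ∉ X
  child_not_mem : b ∉ X
  adj_root_child : G.Adj r b
  adj_root : G.Adj y r
  adj_child : G.Adj y b
  eq_of_adj_root : ∀ x ∈ X, G.Adj r x → x = y

def MemTrap (y a : V) : Prop := ∃ r b, L.IsTrap y r b ∧ (a = r ∨ a = b)

structure IsTrapped (y : V) : Prop where
  isIsolatedIn : IsIsolatedIn G X y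
  memTrap_of_adj : ∀ a, G.Adj y a → L.MemTrap y a

/-- The vertex `w` will carry the colour of `y` or, if `y` is trapped, the trap colour. -/
structure IsProxy (y w : V) : Prop where
  adj : G.Adj y w
  isTrap_of_isTrapped : L.IsTrapped y → ∃ r, L.IsTrap y r w
  not_memTrap : ¬L.IsTrapped y → ¬L.MemTrap y w
  depth_le : ¬L.IsTrapped y → ∀ a, G.Adj y a → ¬L.MemTrap y a → L.depth a ≤ L.depth w

def IsProxyMap (κ : V → V) : Prop := ∀ y, IsIsolatedIn G X y → L.IsProxy y (κ y)

variable {L}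

lemma IsTrap.depth_eq_one {y r b : V} (h : L.IsTrap y r b) : L.depth b = 1 := by
  obtain ⟨h0, hr, hb, hrb, -⟩ := h
  have := L.depth_eq_or_of_adj hr hb hrb
  omega

lemma IsTrap.eq_of_memTrap {y r b y' : V} (h : L.IsTrap y r b) (h' : L.MemTrap y' b)
    (hy' : y' ∈ X) : y' = y := by
  have hd := h.depth_eq_one
  obtain ⟨h0, hr, hbX, hrb, -, -, honly⟩ := h
  obtain ⟨r', b', ⟨h0', hr', -, hrb', hyr', -⟩, hb⟩ := h'
  rcases hb with rfl | rfl
  · omega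
  · have := L.eq_of_depth_add_one_eq hbX hr hr' hrb hrb' (by omega) (by omega)
    subst this
    exact honly y' hy' hyr'.symm

lemma MemTrap.of_parent {y a p : V} (h : L.MemTrap y a) (ha : a ∉ X) (hp : p ∉ X)
    (hpa : G.Adj p a) (hpd : L.depth p + 1 = L.depth a) : L.MemTrap y p := by
  obtain ⟨r, b, htrap, rfl | rfl⟩ := h
  · have := htrap.depth_root
    omega
  · have hd := htrap.depth_eq_one
    have hrp := L.eq_of_depth_add_one_eq ha htrap.root_not_mem hp htrap.adj_root_child hpa
      (by have := htrap.depth_root; omega) hpd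
    exact ⟨r, a, htrap, .inl hrp.symm⟩

variable (L)

lemma exists_isProxy [Finite V] (hnbr : ∀ v, ∃ u, G.Adj v u) :
    ∃ κ, L.IsProxyMap κ := by
  suffices ∀ y, IsIsolatedIn G X y → ∃ w, L.IsProxy y w by
    choose! κ hκ using this
    exact ⟨κ, hκ⟩
  intro y hy
  by_cases htr : L.IsTrapped y
  · obtain ⟨a, hya⟩ := hnbr y
    obtain ⟨r, b, htrap, -⟩ := htr.memTrap_of_adj a hya
    exact ⟨b, ⟨htrap.adj_child, fun _ => ⟨r, htrap⟩, absurd htr, absurd htr⟩⟩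
  · have hne : {a | G.Adj y a ∧ ¬L.MemTrap y a}.Nonempty := by
      by_contra! h
      exact htr ⟨hy, fun a hya => by_contra fun hm => h.subset ⟨hya, hm⟩⟩
    obtain ⟨w, ⟨hyw, hw⟩, hmax⟩ := Set.exists_max_image _ L.depth (Set.toFinite _) hne
    exact ⟨w, ⟨hyw, fun h => absurd h htr, fun _ => hw, fun _ a hya ha => hmax a ⟨hya, ha⟩⟩⟩

open Classical in
/-- `inr x` is the private colour of `x ∈ X`, `inl none` the trap colour, and `inl (some _)` the
two depth colours, which alternate in pairs of levels so that the parent and the children of a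
vertex get different colours. -/
noncomputable def coloring (κ : V → V) (v : V) : Option Bool ⊕ X :=
  if hv : v ∈ X then .inr ⟨v, hv⟩
  else if h : ∃ y, IsIsolatedIn G X y ∧ ¬L.IsTrapped y ∧ κ y = v then
    .inr ⟨h.choose, h.choose_spec.1.mem⟩
  else if ∃ y, L.IsTrapped y ∧ κ y = v then .inl none
  else .inl (some (L.depth v / 2).bodd)

variable {L} {κ : V → V}

lemma coloring_of_mem {v : V} (hv : v ∈ X) : L.coloring κ v = .inr ⟨v, hv⟩ := by
  simp [coloring, hv]

lemma coloring_eq_inr {v x : V} {hx : x ∈ X} (hv : v ∉ X)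
    (h : L.coloring κ v = .inr ⟨x, hx⟩) :
    IsIsolatedIn G X x ∧ ¬L.IsTrapped x ∧ κ x = v := by
  unfold coloring at h
  rw [dif_neg hv] at h
  split_ifs at h with h₁ h₂
  · cases h
    exact h₁.choose_spec

lemma coloring_eq_none {v : V} (h : L.coloring κ v = .inl none) :
    ∃ y, L.IsTrapped y ∧ κ y = v := by
  unfold coloring at h
  split_ifs at h with h₁ h₂ h₃
  · exact h₃
  · cases h

lemma coloring_eq_some {v : V} {b : Bool} (h : L.coloring κ v = .inl (some b)) :
    b = (L.depth v / 2).bodd := by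
  unfold coloring at h
  split_ifs at h <;> simp only [reduceCtorEq, Sum.inl.injEq, Option.some.injEq] at h
  exact h.symm

lemma coloring_proxy_eq_none_or_inr {y : V} (hy : IsIsolatedIn G X y) (hκy : κ y ∉ X) :
    L.IsTrapped y ∧ L.coloring κ (κ y) = .inl none ∨ ∃ x, L.coloring κ (κ y) = .inr x := by
  unfold coloring
  rw [dif_neg hκy]
  by_cases htr : L.IsTrapped y
  · split_ifs with h h'
    · exact .inr ⟨_, rfl⟩
    · exact .inl ⟨htr, rfl⟩
    · exact absurd ⟨y, htr, rfl⟩ h'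
  · rw [dif_pos ⟨y, hy, htr, rfl⟩]
    exact .inr ⟨_, rfl⟩

lemma subsingleton_neighborSet {v : V} (hv : v ∉ X) (h0 : L.depth v = 0)
    (hX : ∀ u, G.Adj v u → u ∉ X) : (G.neighborSet v).Subsingleton := fun _ ha _ hb =>
  L.eq_of_adj_of_depth_eq_zero hv h0 (hX _ ha) (hX _ hb) ha hb

lemma isONCFAt_coloring_of_adj_mem {v x : V} (hx : x ∈ X) (hvx : G.Adj v x)
    (h : ∀ u, G.Adj v u → u ∉ X → L.coloring κ u ≠ .inr ⟨x, hx⟩) :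
    IsONCFAt G (L.coloring κ) v := by
  refine ⟨x, hvx, fun u hvu hux => ?_⟩
  rw [coloring_of_mem hx]
  by_cases hu : u ∈ X
  · rw [coloring_of_mem hu]
    exact fun h => hux (congrArg Subtype.val (Sum.inr_injective h))
  · exact h u hvu hu

lemma isONCFAt_coloring_of_mem_of_adj_mem {v x : V} (hv : v ∈ X) (hx : x ∈ X)
    (hvx : G.Adj v x) : IsONCFAt G (L.coloring κ) v :=
  isONCFAt_coloring_of_adj_mem hx hvx fun _ _ hu h =>
    (coloring_eq_inr hu h).1.not_mem_of_adj v hvx.symm hv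

lemma depth_eq_one_of_coloring_eq_none (hκ : L.IsProxyMap κ) {v : V}
    (h : L.coloring κ v = .inl none) : L.depth v = 1 := by
  obtain ⟨y, hy, rfl⟩ := coloring_eq_none h
  obtain ⟨r, hr⟩ := (hκ y hy.isIsolatedIn).isTrap_of_isTrapped hy
  exact hr.depth_eq_one

lemma coloring_ne_of_depth_eq_add_two (hκ : L.IsProxyMap κ) {u p : V} (hu : u ∉ X)
    (hp : p ∉ X) (hd : L.depth u = L.depth p + 2) : L.coloring κ u ≠ L.coloring κ p := by
  intro h
  rcases hc : L.coloring κ p with (_ | b) | x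
  · have := depth_eq_one_of_coloring_eq_none hκ hc
    have := depth_eq_one_of_coloring_eq_none hκ (h.trans hc)
    omega
  · have hbu := coloring_eq_some (h.trans hc)
    rw [coloring_eq_some hc, hd, Nat.add_div_right _ two_pos, Nat.bodd_succ] at hbu
    simp at hbu
  · have := (coloring_eq_inr hu (h.trans hc)).2.2.symm.trans (coloring_eq_inr hp hc).2.2
    subst this
    omega

lemma isONCFAt_coloring_of_depth_ne_zero (hκ : L.IsProxyMap κ) {v : V} (hv : v ∉ X)
    (hd : L.depth v ≠ 0) : IsONCFAt G (L.coloring κ) v := by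
  obtain ⟨p, ⟨hp, hpv, hpd⟩, -⟩ := L.existsUnique_parent hv hd
  refine ⟨p, hpv.symm, fun u hvu hup => ?_⟩
  by_cases hu : u ∈ X
  · rw [coloring_of_mem hu]
    intro h
    obtain ⟨hiso, htr, rfl⟩ := coloring_eq_inr hp h.symm
    by_cases hm : L.MemTrap u v
    · exact (hκ u hiso).not_memTrap htr (hm.of_parent hv hp hpv hpd)
    · have := (hκ u hiso).depth_le htr v hvu.symm hm
      omega
  · have := L.depth_eq_add_one_of_adj hv hp hu hpv hpd hvu hup
    exact coloring_ne_of_depth_eq_add_two hκ hu hp (by omega)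

lemma isONCFAt_coloring_of_depth_eq_zero_of_adj_mem (hκ : L.IsProxyMap κ) {v x₀ : V}
    (hv : v ∉ X) (h0 : L.depth v = 0) (hx₀ : x₀ ∈ X) (hvx₀ : G.Adj v x₀) :
    IsONCFAt G (L.coloring κ) v := by
  suffices ∃ x, ∃ hx : x ∈ X, G.Adj v x ∧
      ∀ u, G.Adj v u → u ∉ X → L.coloring κ u ≠ .inr ⟨x, hx⟩ by
    obtain ⟨x, hx, hvx, h⟩ := this
    exact isONCFAt_coloring_of_adj_mem hx hvx h
  by_contra! h
  obtain ⟨b, hvb, hb, hcb⟩ := h x₀ hx₀ hvx₀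
  obtain ⟨hiso, htr, hκb⟩ := coloring_eq_inr hb hcb
  have htrap : L.IsTrap x₀ v b := by
    refine ⟨h0, hv, hb, hvb, hvx₀.symm, hκb ▸ (hκ x₀ hiso).adj, fun x hx hvx => ?_⟩
    obtain ⟨u, hvu, hu, hcu⟩ := h x hx hvx
    obtain rfl := L.eq_of_adj_of_depth_eq_zero hv h0 hu hb hvu hvb
    exact congrArg Subtype.val (Sum.inr_injective (hcu.symm.trans hcb))
  exact (hκ x₀ hiso).not_memTrap htr (hκb ▸ ⟨v, b, htrap, .inr rfl⟩)

lemma isONCFAt_coloring_of_isIsolatedIn (hκ : L.IsProxyMap κ) {y : V}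
    (hy : IsIsolatedIn G X y) : IsONCFAt G (L.coloring κ) y := by
  have hyw := (hκ y hy).adj
  have hw := hy.not_mem_of_adj _ hyw
  refine ⟨κ y, hyw, fun u hyu huw hc => huw ?_⟩
  have hu := hy.not_mem_of_adj u hyu
  rcases coloring_proxy_eq_none_or_inr hy hw with ⟨htr, hcw⟩ | ⟨x, hcw⟩
  · rw [hcw] at hc
    obtain ⟨y', htr', rfl⟩ := coloring_eq_none hc
    obtain ⟨r', htrap'⟩ := (hκ y' htr'.isIsolatedIn).isTrap_of_isTrapped htr'
    rw [htrap'.eq_of_memTrap (htr.memTrap_of_adj _ hyu) hy.mem]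
  · rw [hcw] at hc
    exact (coloring_eq_inr hu hc).2.2.symm.trans (coloring_eq_inr hw hcw).2.2

theorem isONCF_coloring (hκ : L.IsProxyMap κ) (hnbr : ∀ v, ∃ u, G.Adj v u) :
    IsONCF G (L.coloring κ) := by
  intro v
  by_cases hv : v ∈ X
  · by_cases hiso : IsIsolatedIn G X v
    · exact isONCFAt_coloring_of_isIsolatedIn hκ hiso
    · obtain ⟨x, hvx, hx⟩ : ∃ x, G.Adj v x ∧ x ∈ X := by
        by_contra! h
        exact hiso ⟨hv, h⟩
      exact isONCFAt_coloring_of_mem_of_adj_mem hv hx hvx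
  · by_cases hd : L.depth v = 0
    · by_cases hX : ∀ u, G.Adj v u → u ∉ X
      · obtain ⟨u, hvu⟩ := hnbr v
        exact isONCFAt_of_subsingleton_neighborSet_of_adj _
          (L.subsingleton_neighborSet hv hd hX) hvu
      · obtain ⟨x, hvx, hx⟩ : ∃ x, G.Adj v x ∧ x ∈ X := by simpa using hX
        exact isONCFAt_coloring_of_depth_eq_zero_of_adj_mem hκ hv hd hx hvx
    · exact isONCFAt_coloring_of_depth_ne_zero hκ hv hd

end LeafRooting

end

theorem ONCF_le_fvs_add_three_general {V : Type*} [Fintype V]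
    (G : SimpleGraph V) (hconn : G.Connected) (hcard : 2 ≤ Fintype.card V)
    (X : Finset V) (hfvs : (G.induce {v : V | v ∉ X}).IsAcyclic)
    (ℓ : ℕ) (hℓ : X.card = ℓ) :
    ∃ c : V → Fin (ℓ + 3), IsONCF G c := by
  have : Nontrivial V := Fintype.one_lt_card_iff_nontrivial.mp hcard
  have hnbr := hconn.preconnected.exists_adj_of_nontrivial
  obtain ⟨L⟩ := LeafRooting.nonempty_of_isAcyclic (X := (X : Set V)) hfvs
  obtain ⟨κ, hκ⟩ := L.exists_isProxy hnbr
  have hcolors : Fintype.card (Option Bool ⊕ (X : Set V)) = ℓ + 3 := by simp [hℓ, add_comm]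
  exact ⟨_, (L.isONCF_coloring hκ hnbr).comp (Fintype.equivFinOfCardEq hcolors).injective⟩

/-- A connected graph with at least two vertices and a feedback vertex set `X` of
size `ℓ` (i.e. the subgraph induced on `V(G) ∖ X` is acyclic) admits an
`(ℓ+3)`-ONCF-coloring. -/
theorem ONCF_le_fvs_add_three {V : Type*} [Fintype V] [DecidableEq V]
    (G : SimpleGraph V) (hconn : G.Connected) (hcard : 2 ≤ Fintype.card V)
    (X : Finset V) (hfvs : (G.induce {v : V | v ∉ X}).IsAcyclic)
    (ℓ : ℕ) (hℓ : X.card = ℓ) :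
    ∃ c : V → Fin (ℓ + 3), IsONCF G c :=
  ONCF_le_fvs_add_three_general G hconn hcard X hfvs ℓ hℓ
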